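/- (Osgood lemma, uniqueness case.) Let γ : [0,∞) → [0,∞) be measurable and integrable on every bounded interval, let μ : [0,∞) → [0,∞) be continuous and non-decreasing with μ(r) > 0 for r > 0, and suppose the Osgood condition lim_{x → 0^+} ∫_x^1 dr/μ(r) = +∞ holds. Let α : [0,∞) → [0,∞) be measurable such that t ↦ γ(t)·μ(α(t)) is integrable on every bounded interval and α(t) ≤ ∫_0^t γ(τ)·μ(α(τ)) dτ for all t ≥ 0. Then α(t) = 0 for every t ≥ 0. -/

import Mathlib

/-!
Let `g = γ · μ ∘ α` and `E t = ∫₀ᵗ g`, so that `α ≤ E`. For `ε > 0` the absolutely continuous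
function `F = ε + E` satisfies `F' = g ≤ γ · μ ∘ F` almost everywhere, and
`Ψ(y) = ∫_{F 0}^y dr/μ(r)` is Lipschitz on the range of `F`, so `Ψ ∘ F` is absolutely
continuous with derivative `F' / μ ∘ F ≤ γ`. Integrating gives
`∫_ε^{ε + E t} dr/μ(r) ≤ ∫₀ᵗ γ` for every `ε > 0`, which the Osgood condition forbids
unless `E t = 0`.
-/

open MeasureTheory Set Filter Topology intervalIntegral

theorem LipschitzOnWith.comp_absolutelyContinuousOnInterval {X Y : Type*}
    [PseudoMetricSpace X] [PseudoMetricSpace Y] {φ : X → Y} {K : NNReal} {s : Set X}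
    {f : ℝ → X} {a b : ℝ} (hφ : LipschitzOnWith K φ s)
    (hf : AbsolutelyContinuousOnInterval f a b) (hfs : MapsTo f (uIcc a b) s) :
    AbsolutelyContinuousOnInterval (φ ∘ f) a b := by
  rw [absolutelyContinuousOnInterval_iff] at hf ⊢
  intro ε hε
  obtain ⟨δ, hδ, hfδ⟩ := hf (ε / (K + 1)) (by positivity)
  refine ⟨δ, hδ, fun E hE hEδ => ?_⟩
  calc ∑ i ∈ Finset.range E.1, dist ((φ ∘ f) (E.2 i).1) ((φ ∘ f) (E.2 i).2)
      ≤ ∑ i ∈ Finset.range E.1, K * dist (f (E.2 i).1) (f (E.2 i).2) := by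
        gcongr with i hi
        exact hφ.dist_le_mul _ (hfs (hE.1 i hi).1) _ (hfs (hE.1 i hi).2)
    _ = K * ∑ i ∈ Finset.range E.1, dist (f (E.2 i).1) (f (E.2 i).2) := by
        rw [Finset.mul_sum]
    _ ≤ K * (ε / (K + 1)) := by gcongr; exact (hfδ E hE hEδ).le
    _ < ε := by
        rw [mul_div_assoc', div_lt_iff₀ (by positivity)]
        nlinarith

namespace Osgood

variable {μ : ℝ → ℝ}

theorem continuousOn_inv (hμ : ContinuousOn μ (Ioi 0)) (hμpos : ∀ r, 0 < r → 0 < μ r) :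
    ContinuousOn (fun r => (μ r)⁻¹) (Ioi 0) :=
  hμ.inv₀ fun r hr => (hμpos r hr).ne'

theorem intervalIntegrable_inv (hμ : ContinuousOn μ (Ioi 0)) (hμpos : ∀ r, 0 < r → 0 < μ r)
    {x y : ℝ} (hx : 0 < x) (hy : 0 < y) :
    IntervalIntegrable (fun r => (μ r)⁻¹) volume x y :=
  ((continuousOn_inv hμ hμpos).mono
    fun _ hr => (lt_min hx hy).trans_le hr.1).intervalIntegrable

theorem hasDerivAt_integral_inv (hμ : ContinuousOn μ (Ioi 0)) (hμpos : ∀ r, 0 < r → 0 < μ r)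
    {c x : ℝ} (hc : 0 < c) (hx : 0 < x) :
    HasDerivAt (fun y => ∫ r in c..y, (μ r)⁻¹) (μ x)⁻¹ x :=
  integral_hasDerivAt_right (intervalIntegrable_inv hμ hμpos hc hx)
    ((continuousOn_inv hμ hμpos).stronglyMeasurableAtFilter isOpen_Ioi x hx)
    ((continuousOn_inv hμ hμpos).continuousAt (isOpen_Ioi.mem_nhds hx))

theorem exists_lipschitzOnWith_integral_inv (hμ : ContinuousOn μ (Ioi 0))
    (hμpos : ∀ r, 0 < r → 0 < μ r) {c m M : ℝ} (hc : 0 < c) (hm : 0 < m) :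
    ∃ K, LipschitzOnWith K (fun y => ∫ r in c..y, (μ r)⁻¹) (Icc m M) := by
  have hsub : Icc m M ⊆ Ioi 0 := fun r hr => hm.trans_le hr.1
  obtain ⟨C, hC⟩ :=
    isCompact_Icc.exists_bound_of_continuousOn ((continuousOn_inv hμ hμpos).mono hsub)
  refine ⟨Real.toNNReal C, (convex_Icc m M).lipschitzOnWith_of_nnnorm_hasDerivWithin_le
    (fun x hx => (hasDerivAt_integral_inv hμ hμpos hc (hsub hx)).hasDerivWithinAt)
    fun x hx => ?_⟩
  rw [← NNReal.coe_le_coe, coe_nnnorm]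
  exact (hC x hx).trans (Real.le_coe_toNNReal C)

theorem integral_inv_le_integral_of_deriv_le (hμ : ContinuousOn μ (Ioi 0))
    (hμpos : ∀ r, 0 < r → 0 < μ r) {F γ : ℝ → ℝ} {a b : ℝ} (hab : a ≤ b)
    (hF : AbsolutelyContinuousOnInterval F a b) (hFpos : ∀ s ∈ Icc a b, 0 < F s)
    (hγ : IntervalIntegrable γ volume a b)
    (hFγ : ∀ᵐ s, s ∈ Icc a b → deriv F s ≤ γ s * μ (F s)) :
    ∫ r in F a..F b, (μ r)⁻¹ ≤ ∫ s in a..b, γ s := by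
  set Ψ := fun y => ∫ r in F a..y, (μ r)⁻¹
  have hFa : 0 < F a := hFpos a (left_mem_Icc.2 hab)
  rw [← uIcc_of_le hab] at hFpos hFγ
  obtain ⟨m, hm, hmin⟩ := isCompact_uIcc.exists_isMinOn nonempty_uIcc hF.continuousOn
  obtain ⟨M, -, hmax⟩ := isCompact_uIcc.exists_isMaxOn nonempty_uIcc hF.continuousOn
  obtain ⟨K, hK⟩ := exists_lipschitzOnWith_integral_inv hμ hμpos hFa (hFpos m hm) (M := F M)
  have hΨF : AbsolutelyContinuousOnInterval (Ψ ∘ F) a b :=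
    hK.comp_absolutelyContinuousOnInterval hF fun s hs => ⟨hmin hs, hmax hs⟩
  have hderiv : ∀ᵐ s, s ∈ uIcc a b → deriv (Ψ ∘ F) s ≤ γ s := by
    filter_upwards [hF.ae_differentiableAt, hFγ] with s hdiff hle hs
    have hμF := hμpos _ (hFpos s hs)
    rw [((hasDerivAt_integral_inv hμ hμpos hFa (hFpos s hs)).comp s
      (hdiff hs).hasDerivAt).deriv]
    calc (μ (F s))⁻¹ * deriv F s ≤ (μ (F s))⁻¹ * (γ s * μ (F s)) := by gcongr; exact hle hs
      _ = γ s := by field_simp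
  calc ∫ r in F a..F b, (μ r)⁻¹ = ∫ s in a..b, deriv (Ψ ∘ F) s := by
        rw [hΨF.integral_deriv_eq_sub]; simp [Ψ]
    _ ≤ ∫ s in a..b, γ s :=
        integral_mono_ae_restrict hab hΨF.intervalIntegrable_deriv hγ
          ((ae_restrict_iff' measurableSet_Icc).2 (uIcc_of_le hab ▸ hderiv))

theorem integral_inv_le_integral_of_le_integral {γ α : ℝ → ℝ} {t ε : ℝ} (ht : 0 ≤ t)
    (hε : 0 < ε) (hγnn : ∀ s ∈ Icc 0 t, 0 ≤ γ s) (hγ : IntegrableOn γ (Icc 0 t))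
    (hμ : ContinuousOn μ (Ioi 0)) (hμmono : MonotoneOn μ (Ici 0))
    (hμpos : ∀ r, 0 < r → 0 < μ r) (hαnn : ∀ s ∈ Icc 0 t, 0 ≤ α s)
    (hint : IntegrableOn (fun s => γ s * μ (α s)) (Icc 0 t))
    (hineq : ∀ s ∈ Icc 0 t, α s ≤ ∫ τ in (0:ℝ)..s, γ τ * μ (α τ)) :
    ∫ r in ε..ε + ∫ τ in (0:ℝ)..t, γ τ * μ (α τ), (μ r)⁻¹ ≤ ∫ τ in (0:ℝ)..t, γ τ := by
  set F := fun s => ε + ∫ τ in (0:ℝ)..s, γ τ * μ (α τ)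
  have hg : IntervalIntegrable (fun s => γ s * μ (α s)) volume 0 t :=
    (hint.mono_set (uIcc_of_le ht).subset).intervalIntegrable
  have hF : AbsolutelyContinuousOnInterval F 0 t :=
    contDiffOn_const.absolutelyContinuousOnInterval.add
      (hg.absolutelyContinuousOnInterval_intervalIntegral left_mem_uIcc)
  have hαF : ∀ s ∈ Icc 0 t, α s < F s := fun s hs => by linarith [hineq s hs]
  have hFpos : ∀ s ∈ Icc 0 t, 0 < F s := fun s hs => (hαnn s hs).trans_lt (hαF s hs)
  have hFγ : ∀ᵐ s, s ∈ Icc 0 t → deriv F s ≤ γ s * μ (F s) := by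
    filter_upwards [hg.ae_hasDerivAt_integral] with s hderiv hs
    rw [((hderiv (uIcc_of_le ht ▸ hs) 0 left_mem_uIcc).const_add ε).deriv]
    gcongr
    · exact hγnn s hs
    · exact hμmono (hαnn s hs) (hFpos s hs).le (hαF s hs).le
  simpa [F] using integral_inv_le_integral_of_deriv_le hμ hμpos ht hF hFpos
    (hγ.mono_set (uIcc_of_le ht).subset).intervalIntegrable hFγ

theorem tendsto_integral_inv (hμ : ContinuousOn μ (Ioi 0)) (hμpos : ∀ r, 0 < r → 0 < μ r)
    (hosgood : Tendsto (fun x => ∫ r in x..(1:ℝ), (μ r)⁻¹) (𝓝[>] 0) atTop)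
    {c : ℝ} (hc : 0 < c) :
    Tendsto (fun x => ∫ r in x..c, (μ r)⁻¹) (𝓝[>] 0) atTop := by
  refine (tendsto_atTop_add_const_right _ (-∫ r in c..(1:ℝ), (μ r)⁻¹) hosgood).congr' ?_
  filter_upwards [self_mem_nhdsWithin] with x (hx : 0 < x)
  rw [← integral_add_adjacent_intervals (intervalIntegrable_inv hμ hμpos hx hc)
    (intervalIntegrable_inv hμ hμpos hc one_pos)]
  ring

end Osgood

theorem osgood_lemma_uniqueness_general (γ μ α : ℝ → ℝ)
    (hγnn : ∀ t, 0 ≤ t → 0 ≤ γ t)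
    (hγint : ∀ T, 0 < T → IntegrableOn γ (Icc 0 T))
    (hμcont : ContinuousOn μ (Ici 0)) (hμmono : MonotoneOn μ (Ici 0))
    (hμpos : ∀ r, 0 < r → 0 < μ r)
    (hosgood : Tendsto (fun x => ∫ r in x..(1:ℝ), (μ r)⁻¹) (nhdsWithin 0 (Ioi 0)) atTop)
    (hαnn : ∀ t, 0 ≤ t → 0 ≤ α t)
    (hint : ∀ T, 0 < T → IntegrableOn (fun t => γ t * μ (α t)) (Icc 0 T))
    (hineq : ∀ t, 0 ≤ t → α t ≤ ∫ τ in (0:ℝ)..t, γ τ * μ (α τ)) :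
    ∀ t, 0 ≤ t → α t = 0 := by
  intro t ht
  refine le_antisymm ?_ (hαnn t ht)
  rcases ht.eq_or_lt with rfl | ht0
  · simpa using hineq 0 le_rfl
  by_contra! hpos
  set c := ∫ τ in (0:ℝ)..t, γ τ * μ (α τ)
  have hc : 0 < c := hpos.trans_le (hineq t ht)
  have hμ : ContinuousOn μ (Ioi 0) := hμcont.mono Ioi_subset_Ici_self
  obtain ⟨ε, hbig, hε, hεc⟩ :=
    (((Osgood.tendsto_integral_inv hμ hμpos hosgood hc).eventually_gt_atTop
      (∫ τ in (0:ℝ)..t, γ τ)).and (Ioo_mem_nhdsGT hc)).exists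
  have hbound : ∫ r in ε..c, (μ r)⁻¹ ≤ ∫ τ in (0:ℝ)..t, γ τ :=
    calc ∫ r in ε..c, (μ r)⁻¹ ≤ ∫ r in ε..ε + c, (μ r)⁻¹ :=
          integral_mono_interval le_rfl hεc.le (by linarith)
            (ae_restrict_of_forall_mem measurableSet_Ioc
              fun r hr => inv_nonneg.2 (hμpos r (hε.trans hr.1)).le)
            (Osgood.intervalIntegrable_inv hμ hμpos hε (by linarith))
      _ ≤ ∫ τ in (0:ℝ)..t, γ τ :=
          Osgood.integral_inv_le_integral_of_le_integral ht hε (fun s hs => hγnn s hs.1)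
            (hγint t ht0) hμ hμmono hμpos (fun s hs => hαnn s hs.1) (hint t ht0)
            (fun s hs => hineq s hs.1)
  exact hbig.not_ge hbound

/-- Osgood lemma, uniqueness case: if the Osgood condition
`lim_{x → 0⁺} ∫_x^1 dr/μ(r) = +∞` holds and `α` satisfies the Osgood integral
inequality with vanishing initial bound, then `α ≡ 0`. -/
theorem osgood_lemma_uniqueness (γ μ α : ℝ → ℝ)
    (hγnn : ∀ t, 0 ≤ t → 0 ≤ γ t)
    (hγint : ∀ T, 0 < T → IntegrableOn γ (Icc 0 T))
    (hμcont : ContinuousOn μ (Ici 0)) (hμmono : MonotoneOn μ (Ici 0))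
    (hμnn : ∀ r, 0 ≤ r → 0 ≤ μ r)
    (hμpos : ∀ r, 0 < r → 0 < μ r)
    (hosgood : Tendsto (fun x => ∫ r in x..(1:ℝ), (μ r)⁻¹) (nhdsWithin 0 (Ioi 0)) atTop)
    (hα : Measurable α) (hαnn : ∀ t, 0 ≤ t → 0 ≤ α t)
    (hint : ∀ T, 0 < T → IntegrableOn (fun t => γ t * μ (α t)) (Icc 0 T))
    (hineq : ∀ t, 0 ≤ t → α t ≤ ∫ τ in (0:ℝ)..t, γ τ * μ (α τ)) :
    ∀ t, 0 ≤ t → α t = 0 :=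
  osgood_lemma_uniqueness_general γ μ α hγnn hγint hμcont hμmono hμpos hosgood hαnn hint hineq
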